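/- Elementary properties of the Carleman weight h_ε: let 0 < τ1 < τ, ε ∈ (0,1], and define h'_ε(t) := τ1 + (τ e^{t/2} − τ1)·τ²/(τ² + ε e^t) with h''_ε := (h'_ε)'. Then for all t ≥ 0: (i) h'_ε(t) > τ1; (ii) |h''_ε(t)| ≤ 3 h'_ε(t); and (iii) if ε e^t ≤ τ² then h''_ε(t) ≥ 0 (i.e. h_ε is convex up to the inflection region where ε e^t ≈ τ²). -/

import Mathlib

/-
Substitute `x = e^{t/2} ≥ 1` and `D = τ² + εx²`. Then `h' = τ1 + (τx − τ1)τ²/D`, and differentiating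
gives `h'' = G − L` with gain `G = τ³x/(2D)` and loss `L = (τx − τ1)τ²εx²/D²`, both nonnegative.
Splitting `h' = τ1εx²/D + 2G` and using `εx² ≤ D` in `L ≤ (τx − τ1)τ²/D = h' − τ1` shows that
`G` and `L` are each at most `h'`, so even `|h''| ≤ h'`. If `εx² ≤ τ²` then `2εx² ≤ D`, and with
`τx − τ1 ≤ τx` this makes the loss at most the gain.
-/

open MeasureTheory Filter
open scoped ENNReal Topology BigOperators

noncomputable section

/-- The derivative `h'_ε` of the Carleman weight:
`h'_ε(t) = τ1 + (τ e^{t/2} - τ1)·τ²/(τ² + ε e^t)`. -/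
def hep (τ1 τ ε t : ℝ) : ℝ :=
  τ1 + (τ * Real.exp (t / 2) - τ1) * τ ^ 2 / (τ ^ 2 + ε * Real.exp t)

/-- The Carleman weight `h_ε(t) = ∫_0^t h'_ε(s) ds`. -/
def he (τ1 τ ε t : ℝ) : ℝ := ∫ s in (0 : ℝ)..t, hep τ1 τ ε s

/-- The second derivative `h''_ε = (h'_ε)'`. -/
def hepp (τ1 τ ε : ℝ) : ℝ → ℝ := deriv (hep τ1 τ ε)

lemma exp_eq_exp_half_sq (t : ℝ) : Real.exp t = Real.exp (t / 2) ^ 2 := by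
  rw [← Real.exp_nat_mul]; ring_nf

def carlemanSlope (τ1 τ ε x : ℝ) : ℝ := τ1 + (τ * x - τ1) * τ ^ 2 / (τ ^ 2 + ε * x ^ 2)

def carlemanGain (τ ε x : ℝ) : ℝ := τ ^ 3 * x / (2 * (τ ^ 2 + ε * x ^ 2))

def carlemanLoss (τ1 τ ε x : ℝ) : ℝ :=
  (τ * x - τ1) * τ ^ 2 * (ε * x ^ 2) / (τ ^ 2 + ε * x ^ 2) ^ 2

lemma hep_eq_carlemanSlope (τ1 τ ε t : ℝ) :
    hep τ1 τ ε t = carlemanSlope τ1 τ ε (Real.exp (t / 2)) := by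
  rw [hep, carlemanSlope, exp_eq_exp_half_sq t]

lemma hasDerivAt_hep {τ1 τ ε t : ℝ} (hD : τ ^ 2 + ε * Real.exp t ≠ 0) :
    HasDerivAt (hep τ1 τ ε)
      (carlemanGain τ ε (Real.exp (t / 2)) - carlemanLoss τ1 τ ε (Real.exp (t / 2))) t := by
  have hx := ((hasDerivAt_id' t).div_const 2).exp
  have hnum := ((hx.const_mul τ).sub_const τ1).mul_const (τ ^ 2)
  have hden := ((Real.hasDerivAt_exp t).const_mul ε).const_add (τ ^ 2)
  refine ((hnum.div hden hD).const_add τ1).congr_deriv ?_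
  rw [carlemanGain, carlemanLoss, ← exp_eq_exp_half_sq]
  field_simp

lemma hepp_eq {τ1 τ ε t : ℝ} (hD : τ ^ 2 + ε * Real.exp t ≠ 0) :
    hepp τ1 τ ε t = carlemanGain τ ε (Real.exp (t / 2)) - carlemanLoss τ1 τ ε (Real.exp (t / 2)) :=
  (hasDerivAt_hep hD).deriv

section
variable {τ1 τ ε x : ℝ}

lemma two_mul_carlemanGain_le_carlemanSlope (hτ1 : 0 ≤ τ1) (hε : 0 ≤ ε) (hτ : τ ≠ 0) :
    2 * carlemanGain τ ε x ≤ carlemanSlope τ1 τ ε x := by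
  have hD : 0 < τ ^ 2 + ε * x ^ 2 := by positivity
  have hsplit : carlemanSlope τ1 τ ε x
      = τ1 * (ε * x ^ 2) / (τ ^ 2 + ε * x ^ 2) + 2 * carlemanGain τ ε x := by
    rw [carlemanSlope, carlemanGain]
    field_simp
    ring
  rw [hsplit, le_add_iff_nonneg_left]
  positivity

lemma carlemanLoss_le_carlemanSlope (hτ1 : 0 ≤ τ1) (hu : τ1 ≤ τ * x) (hε : 0 ≤ ε) (hτ : τ ≠ 0) :
    carlemanLoss τ1 τ ε x ≤ carlemanSlope τ1 τ ε x := by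
  have hD : 0 < τ ^ 2 + ε * x ^ 2 := by positivity
  have hfrac : ε * x ^ 2 / (τ ^ 2 + ε * x ^ 2) ≤ 1 :=
    (div_le_one hD).2 (le_add_of_nonneg_left (sq_nonneg τ))
  calc carlemanLoss τ1 τ ε x
      = (τ * x - τ1) * τ ^ 2 / (τ ^ 2 + ε * x ^ 2) * (ε * x ^ 2 / (τ ^ 2 + ε * x ^ 2)) := by
        rw [carlemanLoss]; field_simp
    _ ≤ (τ * x - τ1) * τ ^ 2 / (τ ^ 2 + ε * x ^ 2) :=
        mul_le_of_le_one_right (by have := sub_nonneg.2 hu; positivity) hfrac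
    _ ≤ carlemanSlope τ1 τ ε x := le_add_of_nonneg_left hτ1

lemma carlemanLoss_le_carlemanGain (hτ1 : 0 ≤ τ1) (hτ : 0 < τ) (hx : 0 ≤ x) (hε : 0 ≤ ε)
    (h : ε * x ^ 2 ≤ τ ^ 2) : carlemanLoss τ1 τ ε x ≤ carlemanGain τ ε x := by
  rw [carlemanLoss, carlemanGain, div_le_div_iff₀ (by positivity) (by positivity)]
  have hτ2D : 0 ≤ τ ^ 2 * (τ ^ 2 + ε * x ^ 2) := by positivity
  linarith [mul_nonneg (mul_nonneg hτ1 (mul_nonneg hε (sq_nonneg x))) hτ2D,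
    mul_nonneg (mul_nonneg (mul_nonneg hτ.le hx) (sub_nonneg.2 h)) hτ2D]

end

theorem carleman_weight_properties_general
    (τ1 τ ε : ℝ) (hτ1 : 0 < τ1) (hττ1 : τ1 < τ) (hε : 0 < ε)
    (t : ℝ) (ht : 0 ≤ t) :
    τ1 < hep τ1 τ ε t ∧
    |hepp τ1 τ ε t| ≤ 3 * hep τ1 τ ε t ∧
    (ε * Real.exp t ≤ τ ^ 2 → 0 ≤ hepp τ1 τ ε t) := by
  have hτ : 0 < τ := hτ1.trans hττ1
  rw [hepp_eq (by positivity), hep_eq_carlemanSlope, exp_eq_exp_half_sq t]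
  have hx : 1 ≤ Real.exp (t / 2) := Real.one_le_exp (by linarith)
  generalize Real.exp (t / 2) = x at hx ⊢
  have hu : τ1 < τ * x := by nlinarith
  have hgain : 0 ≤ carlemanGain τ ε x := by rw [carlemanGain]; positivity
  have hloss : 0 ≤ carlemanLoss τ1 τ ε x := by
    rw [carlemanLoss]; have := sub_nonneg.2 hu.le; positivity
  have hslope : τ1 < carlemanSlope τ1 τ ε x := by
    rw [carlemanSlope, lt_add_iff_pos_right]; have := sub_pos.2 hu; positivity
  refine ⟨hslope, ?_, fun h => sub_nonneg.2 (carlemanLoss_le_carlemanGain hτ1.le hτ (by linarith) hε.le h)⟩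
  calc |carlemanGain τ ε x - carlemanLoss τ1 τ ε x| ≤ carlemanSlope τ1 τ ε x :=
        abs_sub_le_of_nonneg_of_le hgain
          (by linarith [two_mul_carlemanGain_le_carlemanSlope (x := x) hτ1.le hε.le hτ.ne'])
          hloss (carlemanLoss_le_carlemanSlope hτ1.le hu.le hε.le hτ.ne')
    _ ≤ 3 * carlemanSlope τ1 τ ε x := by linarith

/-- Elementary properties of the Carleman weight `h_ε`: for `0 < τ1 < τ`,
`0 < ε ≤ 1` and `t ≥ 0` one has `h'_ε(t) > τ1`, `|h''_ε(t)| ≤ 3 h'_ε(t)`, and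
`h''_ε(t) ≥ 0` whenever `ε e^t ≤ τ²`. -/
theorem carleman_weight_properties
    (τ1 τ ε : ℝ) (hτ1 : 0 < τ1) (hττ1 : τ1 < τ) (hε : 0 < ε) (hε1 : ε ≤ 1)
    (t : ℝ) (ht : 0 ≤ t) :
    τ1 < hep τ1 τ ε t ∧
    |hepp τ1 τ ε t| ≤ 3 * hep τ1 τ ε t ∧
    (ε * Real.exp t ≤ τ ^ 2 → 0 ≤ hepp τ1 τ ε t) :=
  carleman_weight_properties_general τ1 τ ε hτ1 hττ1 hε t ht
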